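/- arXiv:1506.01935 — 2 statements merged into one kernel-verified Lean document; each statement's English description precedes it below -/
import Mathlib

section
/- Let n ≥ 1 and let q : ℝ × ℝⁿ → ℂ be integrable on ℝ × ℝⁿ. Then for every ω ∈ ℝⁿ and every ξ ∈ ℝⁿ, the Fourier transform in y of the light-ray transform equals the space-time Fourier transform of q evaluated at the point (⟨ω,ξ⟩, ξ): ∫_{ℝⁿ} ( ∫_ℝ q(t, y − tω) dt ) e^{−2πi⟨y,ξ⟩} dy = ∫_{ℝ×ℝⁿ} q(t,x) e^{−2πi( t⟨ω,ξ⟩ + ⟨x,ξ⟩ )} dt dx = q̂(⟨ω,ξ⟩, ξ). -/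
/-!
Writing `e(r) = exp(-2πi r)`, the phase factorises along the light ray as
`e(⟨y, ξ⟩) = e(t ⟨ω, ξ⟩) e(⟨y - tω, ξ⟩)`. By Fubini the left side becomes the integral of
`q(t, x) e(t ⟨ω, ξ⟩ + ⟨x, ξ⟩)` composed with the shear `(t, y) ↦ (t, y - tω)`, which preserves
Lebesgue measure on `ℝ × ℝⁿ`, so the shear can be undone.
-/

open MeasureTheory Real

section Shear

variable {α E F : Type*} [MeasurableSpace α] [AddGroup E] [MeasurableSpace E] [MeasurableAdd E]
  [MeasurableSub₂ E] [NormedAddCommGroup F] [NormedSpace ℝ F]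
  {μ : Measure α} {ν : Measure E} [SFinite μ] [SFinite ν] [ν.IsAddRightInvariant]
  {f : α → E}

theorem measurePreserving_prod_sub (hf : Measurable f) :
    MeasurePreserving (fun p : α × E => (p.1, p.2 - f p.1)) (μ.prod ν) (μ.prod ν) :=
  (MeasurePreserving.id μ).skew_product (g := fun a x => x - f a) (by fun_prop)
    (.of_forall fun a => (measurePreserving_sub_right ν (f a)).map_eq)

theorem integral_integral_comp_sub_eq_integral_prod {G : α × E → F}
    (hG : Integrable G (μ.prod ν)) (hf : Measurable f) :
    ∫ x, ∫ a, G (a, x - f a) ∂μ ∂ν = ∫ p, G p ∂(μ.prod ν) := by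
  have hGshear : Integrable (fun p : α × E => G (p.1, p.2 - f p.1)) (μ.prod ν) :=
    ((measurePreserving_prod_sub hf).integrable_comp hG.aestronglyMeasurable).mpr hG
  calc ∫ x, ∫ a, G (a, x - f a) ∂μ ∂ν
      = ∫ a, ∫ x, G (a, x - f a) ∂ν ∂μ := (integral_integral_swap hGshear).symm
    _ = ∫ a, ∫ x, G (a, x) ∂ν ∂μ :=
        integral_congr_ae (.of_forall fun a => integral_sub_right_eq_self (fun x => G (a, x)) (f a))
    _ = ∫ p, G p ∂(μ.prod ν) := (integral_prod G hG).symm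

end Shear

theorem MeasureTheory.Integrable.mul_cexp_of_re_eq_zero {α : Type*} [MeasurableSpace α]
    {μ : Measure α} {f g : α → ℂ} (hf : Integrable f μ) (hg : AEMeasurable g μ)
    (hre : ∀ a, (g a).re = 0) : Integrable (fun a => f a * Complex.exp (g a)) μ :=
  hf.mul_bdd (c := 1) hg.cexp.aestronglyMeasurable
    (.of_forall fun a => by simp [Complex.norm_exp, hre])

theorem fourier_slice_lightray_general
    (n : ℕ)
    (q : ℝ × EuclideanSpace ℝ (Fin n) → ℂ)
    (hq : Integrable q)
    (ω ξ : EuclideanSpace ℝ (Fin n)) :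
    ∫ y : EuclideanSpace ℝ (Fin n),
        (∫ t : ℝ, q (t, y - t • ω)) *
          Complex.exp (-2 * (Real.pi : ℂ) * Complex.I * ((inner ℝ y ξ : ℝ) : ℂ))
      = ∫ p : ℝ × EuclideanSpace ℝ (Fin n),
          q p * Complex.exp (-2 * (Real.pi : ℂ) * Complex.I *
            (((p.1 : ℂ) * ((inner ℝ ω ξ : ℝ) : ℂ)) + ((inner ℝ p.2 ξ : ℝ) : ℂ))) := by
  set G : ℝ × EuclideanSpace ℝ (Fin n) → ℂ := fun p => q p * Complex.exp (-2 * (Real.pi : ℂ) *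
    Complex.I * (((p.1 : ℂ) * ((inner ℝ ω ξ : ℝ) : ℂ)) + ((inner ℝ p.2 ξ : ℝ) : ℂ)))
  have hG : Integrable G :=
    hq.mul_cexp_of_re_eq_zero (by fun_prop) fun p => by simp
  have hphase (t : ℝ) (y : EuclideanSpace ℝ (Fin n)) :
      (t : ℂ) * ((inner ℝ ω ξ : ℝ) : ℂ) + ((inner ℝ (y - t • ω) ξ : ℝ) : ℂ)
        = ((inner ℝ y ξ : ℝ) : ℂ) := by
    rw [inner_sub_left, real_inner_smul_left]
    push_cast
    ring
  calc _ = ∫ y : EuclideanSpace ℝ (Fin n), ∫ t : ℝ, G (t, y - t • ω) := by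
        simp_rw [G, hphase, integral_mul_const]
    _ = ∫ p, G p := integral_integral_comp_sub_eq_integral_prod hG (by fun_prop)

theorem fourier_slice_lightray
    (n : ℕ) (hn : 1 ≤ n)
    (q : ℝ × EuclideanSpace ℝ (Fin n) → ℂ)
    (hq : Integrable q)
    (ω ξ : EuclideanSpace ℝ (Fin n)) :
    ∫ y : EuclideanSpace ℝ (Fin n),
        (∫ t : ℝ, q (t, y - t • ω)) *
          Complex.exp (-2 * (Real.pi : ℂ) * Complex.I * ((inner ℝ y ξ : ℝ) : ℂ))
      = ∫ p : ℝ × EuclideanSpace ℝ (Fin n),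
          q p * Complex.exp (-2 * (Real.pi : ℂ) * Complex.I *
            (((p.1 : ℂ) * ((inner ℝ ω ξ : ℝ) : ℂ)) + ((inner ℝ p.2 ξ : ℝ) : ℂ))) :=
  fourier_slice_lightray_general n q hq ω ξ
end

section
/- Let n ≥ 1, T > 0 and M > 0. There exist constants C > 0 and μ ∈ (0,1), depending only on n, T and M, with the following property: for every integrable q : ℝ × ℝⁿ → ℂ vanishing outside the set { (t,x) : t² + ‖x‖² ≤ 2T² } and satisfying ∫|q| ≤ M, for every α ≥ 1, and for every (τ,ξ) ∈ ℝ × ℝⁿ with τ² + ‖ξ‖² ≤ α², one has |q̂(τ,ξ)| ≤ C · e^{α(1−μ)} · ( sup_{(σ,η) ∈ E} |q̂(σ,η)| )^{μ}, where q̂ is the Fourier transform of q on ℝ^{1+n} and E = { (σ,η) ∈ ℝ × ℝⁿ : |σ| ≤ ‖η‖ }. -/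
/-!
Fix a unit vector `e`. Along the line `r ↦ (τ, ξ + r e)` the transform `q̂` is an integral of
`e^{i θ r}` against `q` with frequencies `|θ| ≤ 4πT`, so it is extrapolated from `K + 1`
equally spaced nodes in `[2α, 4α]`, where the line runs inside the cone `E`, to `r = 0` by
Lagrange's formula: the weights have total size `≤ 12^K`, and the error is the Taylor remainder
of `e^{iθr}` of order `K + 1`. For `K ≳ Tα` this gives `|q̂(τ,ξ)| ≤ 12^K S + 12^{-K} M` with
`S = sup_E |q̂|`; the best `K` gives `e^{cα} √(MS)`, and interpolating between this and the
trivial bound `|q̂| ≤ M` trades `e^{cα}` for `e^{(1-μ)α}`.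
-/

open MeasureTheory

/-- The space-time Fourier transform of `q : ℝ × ℝⁿ → ℂ`, with the convention
`q̂(τ,ξ) = ∫ q(t,x) e^{-2πi(tτ + ⟨x,ξ⟩)} dt dx`. -/
noncomputable def spaceTimeFourier (n : ℕ) (q : ℝ × EuclideanSpace ℝ (Fin n) → ℂ)
    (τ : ℝ) (ξ : EuclideanSpace ℝ (Fin n)) : ℂ :=
  ∫ p : ℝ × EuclideanSpace ℝ (Fin n),
    q p * Complex.exp (-2 * (Real.pi : ℂ) * Complex.I *
      (((p.1 : ℂ) * (τ : ℂ)) + ((inner ℝ p.2 ξ : ℝ) : ℂ)))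

open Finset Polynomial Filter Topology
open scoped Nat

lemma pow_div_factorial_le_three_pow (N : ℕ) : (N : ℝ) ^ N / N ! ≤ 3 ^ N :=
  calc (N : ℝ) ^ N / N ! ≤ Real.exp N := Real.pow_div_factorial_le_exp _ (Nat.cast_nonneg N) N
    _ = Real.exp 1 ^ N := by rw [← Real.exp_nat_mul, mul_one]
    _ ≤ 3 ^ N := by
      gcongr
      exact (Real.exp_one_lt_d9.trans (by norm_num)).le

lemma pow_div_factorial_le_pow {y δ : ℝ} {N : ℕ} (hy : 0 ≤ y) (hδ : 0 ≤ δ) (hyN : 3 * y ≤ δ * N) :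
    y ^ N / N ! ≤ δ ^ N := by
  calc y ^ N / N ! ≤ (δ * N / 3) ^ N / N ! := by gcongr; linarith
    _ = δ ^ N * ((N : ℝ) ^ N / N ! / 3 ^ N) := by rw [div_pow, mul_pow]; ring
    _ ≤ δ ^ N * 1 := by
      gcongr
      exact div_le_one_of_le₀ (pow_div_factorial_le_three_pow N) (by positivity)
    _ = δ ^ N := mul_one _

lemma twelve_pow_mul_two_mul_pow_div_factorial_le {ρ : ℝ} (hρ : 0 ≤ ρ) {K : ℕ}
    (hK : 432 * ρ ≤ K + 1) : 12 ^ K * (2 * ρ ^ (K + 1) / (K + 1)!) ≤ (12 ^ K)⁻¹ := by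
  have htail : ρ ^ (K + 1) / (K + 1)! ≤ (1 / 144) ^ (K + 1) :=
    pow_div_factorial_le_pow hρ (by norm_num) (by push_cast; linarith)
  calc 12 ^ K * (2 * ρ ^ (K + 1) / (K + 1)!) ≤ 12 ^ K * (2 * (1 / 144) ^ (K + 1)) := by
        rw [mul_div_assoc]; gcongr
    _ = (12 ^ K)⁻¹ / 72 := by
      rw [pow_succ, one_div_pow, show (144 : ℝ) ^ K = 12 ^ K * 12 ^ K by rw [← mul_pow]; norm_num]
      field_simp
      ring
    _ ≤ (12 ^ K)⁻¹ := div_le_self (by positivity) (by norm_num)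

namespace Lagrange

variable {F ι : Type*} [Field F] [DecidableEq ι] {s : Finset ι} {v : ι → F}

lemma sum_eval_zero_basis_mul_pow (hvs : Set.InjOn v s) {m : ℕ} (hm : m < #s) :
    ∑ j ∈ s, (Lagrange.basis s v j).eval 0 * v j ^ m = if m = 0 then 1 else 0 := by
  have hdeg : (X ^ m : F[X]).degree < #s := by
    rw [degree_X_pow]; exact_mod_cast hm
  have h := congrArg (eval 0) (eq_interpolate hvs hdeg)
  simp only [interpolate_apply, eval_finsetSum, eval_mul, eval_C, eval_pow, eval_X] at h
  rw [← zero_pow_eq, h]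
  exact sum_congr rfl fun j _ => mul_comm _ _

lemma abs_eval_zero_basis (s : Finset ι) (v : ι → ℝ) (j : ι) :
    |(Lagrange.basis s v j).eval 0| = ∏ i ∈ s.erase j, |v i| / |v j - v i| := by
  rw [Lagrange.basis, eval_prod, abs_prod]
  refine prod_congr rfl fun i _ => ?_
  simp [basisDivisor, abs_mul, abs_inv, div_eq_inv_mul]

end Lagrange

lemma prod_erase_range_abs_sub (K j : ℕ) (hj : j ≤ K) :
    ∏ i ∈ (range (K + 1)).erase j, |(j : ℝ) - i| = j ! * (K - j)! := by
  have hsplit : (range (K + 1)).erase j = range j ∪ Ico (j + 1) (K + 1) := by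
    ext i; simp only [mem_erase, mem_range, mem_union, mem_Ico]; omega
  have hdisj : Disjoint (range j) (Ico (j + 1) (K + 1)) := by
    rw [disjoint_left]; intro i hi hi'; simp only [mem_range, mem_Ico] at hi hi'; omega
  have hlow : ∏ i ∈ range j, |(j : ℝ) - i| = j ! := by
    rw [← Nat.descFactorial_self, Nat.descFactorial_eq_prod_range, Nat.cast_prod]
    refine prod_congr rfl fun i hi => ?_
    have hij : i < j := mem_range.mp hi
    rw [Nat.cast_sub hij.le, abs_of_pos (by simpa using hij)]
  have hhigh : ∏ i ∈ Ico (j + 1) (K + 1), |(j : ℝ) - i| = (K - j)! := by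
    rw [prod_Ico_eq_prod_range, show K + 1 - (j + 1) = K - j by omega,
      ← prod_range_add_one_eq_factorial, Nat.cast_prod]
    refine prod_congr rfl fun i _ => ?_
    rw [abs_sub_comm, abs_of_nonneg (by push_cast; linarith)]
    push_cast; ring
  rw [hsplit, prod_union hdisj, hlow, hhigh]

lemma abs_eval_zero_basis_nat_add_le (K : ℕ) {j : ℕ} (hj : j ∈ range (K + 1)) :
    |(Lagrange.basis (range (K + 1)) (fun i : ℕ => (K : ℝ) + i) j).eval 0| ≤
      (2 * K : ℝ) ^ K / (j ! * (K - j)!) := by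
  have hcard : #((range (K + 1)).erase j) = K := by simp [card_erase_of_mem hj]
  have hgap : ∏ i ∈ (range (K + 1)).erase j, |((K : ℝ) + j) - (K + i)| = j ! * (K - j)! := by
    rw [← prod_erase_range_abs_sub K j (Nat.lt_succ_iff.mp (mem_range.mp hj))]
    exact prod_congr rfl fun i _ => by ring_nf
  rw [Lagrange.abs_eval_zero_basis, prod_div_distrib, hgap]
  gcongr
  calc ∏ i ∈ (range (K + 1)).erase j, |(K : ℝ) + i|
      ≤ ∏ i ∈ (range (K + 1)).erase j, (2 * K : ℝ) :=
        prod_le_prod (fun _ _ => abs_nonneg _) fun i hi => by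
          have hi : (i : ℝ) ≤ K := by
            exact_mod_cast Nat.lt_succ_iff.mp (mem_range.mp (mem_of_mem_erase hi))
          rw [abs_of_nonneg (by positivity)]; linarith
    _ = (2 * K : ℝ) ^ K := by rw [prod_const, hcard]

lemma sum_div_factorial_mul_factorial (K : ℕ) (a : ℝ) :
    ∑ j ∈ range (K + 1), a / (j ! * (K - j)!) = a * 2 ^ K / K ! := by
  have hchoose : ∀ j ∈ range (K + 1), a / (j ! * (K - j)!) = a / K ! * (K.choose j : ℝ) := by
    intro j hj
    rw [Nat.cast_choose ℝ (Nat.lt_succ_iff.mp (mem_range.mp hj))]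
    field_simp
  rw [sum_congr rfl hchoose, ← mul_sum, ← Nat.cast_sum, Nat.sum_range_choose]
  push_cast
  ring

lemma exists_extrapolation_weights (K : ℕ) (s : ℝ) :
    ∃ c : ℕ → ℝ,
      (∀ m ≤ K, ∑ j ∈ range (K + 1), c j * (s * (K + j)) ^ m = if m = 0 then 1 else 0) ∧
      ∑ j ∈ range (K + 1), |c j| ≤ 12 ^ K := by
  have hinj : Set.InjOn (fun i : ℕ => (K : ℝ) + i) (range (K + 1)) :=
    fun a _ b _ hab => by simpa using hab
  refine ⟨fun j => (Lagrange.basis (range (K + 1)) (fun i : ℕ => (K : ℝ) + i) j).eval 0,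
    fun m hm => ?_, ?_⟩
  · have hunscaled := Lagrange.sum_eval_zero_basis_mul_pow hinj (m := m)
      (by simpa using Nat.lt_succ_of_le hm)
    simp_rw [mul_pow, mul_left_comm _ (s ^ m), ← mul_sum]
    refine (congrArg (s ^ m * ·) hunscaled).trans ?_
    split_ifs with h <;> simp [h]
  calc ∑ j ∈ range (K + 1), |(Lagrange.basis (range (K + 1)) (fun i : ℕ => (K : ℝ) + i) j).eval 0|
      ≤ ∑ j ∈ range (K + 1), (2 * K : ℝ) ^ K / (j ! * (K - j)!) :=
        sum_le_sum fun j hj => abs_eval_zero_basis_nat_add_le K hj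
    _ = 4 ^ K * ((K : ℝ) ^ K / K !) := by
      rw [sum_div_factorial_mul_factorial, mul_pow, show (4 : ℝ) ^ K = 2 ^ K * 2 ^ K by
        rw [← mul_pow]; norm_num]
      ring
    _ ≤ 4 ^ K * 3 ^ K := by gcongr; exact pow_div_factorial_le_three_pow K
    _ = 12 ^ K := by rw [← mul_pow]; norm_num

lemma norm_one_sub_sum_mul_exp_le {ι : Type*} (s : Finset ι) (c z : ι → ℂ) {K : ℕ} {ρ : ℝ}
    (hmoments : ∀ m ≤ K, ∑ j ∈ s, c j * z j ^ m = if m = 0 then 1 else 0)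
    (hz : ∀ j ∈ s, ‖z j‖ ≤ ρ) (hρ : 2 * ρ ≤ K + 2) :
    ‖1 - ∑ j ∈ s, c j * Complex.exp (z j)‖ ≤ (∑ j ∈ s, ‖c j‖) * (2 * ρ ^ (K + 1) / (K + 1)!) := by
  have htaylor : (1 : ℂ) = ∑ j ∈ s, c j * ∑ m ∈ range (K + 1), z j ^ m / m ! := by
    simp_rw [mul_sum, mul_div_assoc', sum_comm (s := s), ← sum_div]
    rw [sum_eq_single_of_mem 0 (by simp)]
    · simpa using (hmoments 0 K.zero_le).symm
    · intro m hm hm0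
      rw [hmoments m (Nat.lt_succ_iff.mp (mem_range.mp hm)), if_neg hm0, zero_div]
  rw [htaylor, ← sum_sub_distrib, sum_mul]
  refine (norm_sum_le _ _).trans (sum_le_sum fun j hj => ?_)
  have hzj : ‖z j‖ ≤ ρ := hz j hj
  have hremainder := Complex.exp_bound' (x := z j) (n := K + 1)
    (by rw [div_le_iff₀ (by positivity)]; push_cast; linarith)
  rw [← mul_sub, norm_mul, norm_sub_rev]
  calc ‖c j‖ * ‖Complex.exp (z j) - ∑ m ∈ range (K + 1), z j ^ m / (m ! : ℂ)‖
      ≤ ‖c j‖ * (‖z j‖ ^ (K + 1) / (K + 1)! * 2) := by gcongr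
    _ ≤ ‖c j‖ * (ρ ^ (K + 1) / (K + 1)! * 2) := by gcongr
    _ = ‖c j‖ * (2 * ρ ^ (K + 1) / (K + 1)!) := by ring

lemma norm_one_sub_sum_mul_exp_ofReal_mul_I_le {ι : Type*} (s : Finset ι) (c x : ι → ℝ) (θ : ℝ)
    {K : ℕ} {ρ : ℝ} (hmoments : ∀ m ≤ K, ∑ j ∈ s, c j * x j ^ m = if m = 0 then 1 else 0)
    (hx : ∀ j ∈ s, |θ * x j| ≤ ρ) (hρ : 2 * ρ ≤ K + 2) :
    ‖1 - ∑ j ∈ s, (c j : ℂ) * Complex.exp (θ * x j * Complex.I)‖ ≤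
      (∑ j ∈ s, |c j|) * (2 * ρ ^ (K + 1) / (K + 1)!) := by
  have hz : ∀ m ≤ K, ∑ j ∈ s, (c j : ℂ) * (θ * x j * Complex.I) ^ m = if m = 0 then 1 else 0 := by
    intro m hm
    have hfactor : ∀ j, (c j : ℂ) * (θ * x j * Complex.I) ^ m =
        (θ * Complex.I) ^ m * ((c j * x j ^ m : ℝ) : ℂ) := fun j => by push_cast; ring
    simp_rw [hfactor, ← mul_sum, ← Complex.ofReal_sum, hmoments m hm]
    split_ifs with h <;> simp [h]
  simpa using norm_one_sub_sum_mul_exp_le s (fun j => (c j : ℂ)) _ hz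
    (fun j hj => by simpa [Complex.norm_mul] using hx j hj) hρ

lemma norm_integral_sub_sum_mul_integral_le {X ι : Type*} [MeasurableSpace X] {μ : Measure X}
    {f : X → ℂ} (hf : Integrable f μ) {g : X → ℝ} (hg : Measurable g) (s : Finset ι)
    (c : ι → ℂ) (x : ι → ℝ) {ε : ℝ}
    (hε : ∀ p, f p ≠ 0 → ‖1 - ∑ j ∈ s, c j * Complex.exp (g p * x j * Complex.I)‖ ≤ ε) :
    ‖∫ p, f p ∂μ - ∑ j ∈ s, c j * ∫ p, f p * Complex.exp (g p * x j * Complex.I) ∂μ‖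
      ≤ ε * ∫ p, ‖f p‖ ∂μ := by
  have hint : ∀ j, Integrable (fun p => c j * (f p * Complex.exp (g p * x j * Complex.I))) μ := by
    refine fun j => (hf.mul_bdd (c := 1) ?_ (ae_of_all _ fun p => ?_)).const_mul _
    · fun_prop
    · rw [Complex.norm_exp]; simp
  simp_rw [← integral_const_mul]
  rw [← integral_finsetSum _ fun j _ => hint j,
    ← integral_sub hf (integrable_finsetSum _ fun j _ => hint j)]
  refine norm_integral_le_of_norm_le (hf.norm.const_mul ε) (ae_of_all _ fun p => ?_)
  by_cases hfp : f p = 0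
  · simp [hfp]
  calc ‖f p - ∑ j ∈ s, c j * (f p * Complex.exp (g p * x j * Complex.I))‖
      = ‖f p‖ * ‖1 - ∑ j ∈ s, c j * Complex.exp (g p * x j * Complex.I)‖ := by
        rw [← norm_mul, mul_sub, mul_one, mul_sum]; congr 3; ext j; ring
    _ ≤ ‖f p‖ * ε := by gcongr; exact hε p hfp
    _ = ε * ‖f p‖ := mul_comm _ _

lemma le_norm_add_smul_of_norm_le {E : Type*} [NormedAddCommGroup E] [NormedSpace ℝ E]
    {ξ e : E} {α r : ℝ} (hξ : ‖ξ‖ ≤ α) (he : ‖e‖ = 1) (hr : 2 * α ≤ r) : α ≤ ‖ξ + r • e‖ := by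
  have h := norm_sub_norm_le (r • e) (-ξ)
  rw [norm_smul, he, mul_one, norm_neg, sub_neg_eq_add, add_comm] at h
  linarith [le_abs_self r, Real.norm_eq_abs r]

lemma le_two_mul_mul_of_forall_le {A B t a b : ℝ} (ht : 1 < t) (hB : 0 ≤ B) (ha : 0 ≤ a)
    (hab : a ≤ b) (h : ∀ m : ℕ, A ≤ B * (t ^ m * a ^ 2 + (t ^ m)⁻¹ * b ^ 2)) :
    A ≤ 2 * t * B * (a * b) := by
  rcases ha.eq_or_lt with rfl | ha
  · have hlim : Tendsto (fun m : ℕ => B * (t ^ m * 0 ^ 2 + (t ^ m)⁻¹ * b ^ 2)) atTop (𝓝 0) := by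
      simpa using ((tendsto_inv_atTop_zero.comp (tendsto_pow_atTop_atTop_of_one_lt ht)).mul_const
        (b ^ 2)).const_mul B
    simpa using ge_of_tendsto' hlim h
  -- take `m` with `t ^ m ≈ b / a`, which balances the two terms
  obtain ⟨k, hk, hk'⟩ := exists_nat_pow_near ((one_le_div ha).mpr hab) ht
  have hba : 0 < b / a := div_pos (ha.trans_le hab) ha
  calc A ≤ B * (t ^ (k + 1) * a ^ 2 + (t ^ (k + 1))⁻¹ * b ^ 2) := h (k + 1)
    _ ≤ B * (t * (b / a) * a ^ 2 + (b / a)⁻¹ * b ^ 2) := by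
      rw [pow_succ']
      gcongr
      rw [← pow_succ']
      exact hk'.le
    _ = B * (t * (a * b) + a * b) := by field_simp
    _ ≤ 2 * t * B * (a * b) := by nlinarith [mul_nonneg hB (mul_nonneg ha.le (ha.le.trans hab))]

lemma le_rpow_mul_rpow_of_le_of_le {A x y θ : ℝ} (hA : 0 ≤ A) (hx : A ≤ x) (hy : A ≤ y)
    (hθ0 : 0 ≤ θ) (hθ1 : θ ≤ 1) : A ≤ x ^ (1 - θ) * y ^ θ :=
  calc A = A ^ (1 - θ) * A ^ θ := by
        rw [← Real.rpow_add' hA (by norm_num), sub_add_cancel, Real.rpow_one]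
    _ ≤ x ^ (1 - θ) * y ^ θ :=
      mul_le_mul (Real.rpow_le_rpow hA hx (by linarith)) (Real.rpow_le_rpow hA hy hθ0)
        (Real.rpow_nonneg hA _) (Real.rpow_nonneg (hA.trans hx) _)

lemma le_max_mul_exp_mul_rpow {A M D S c α ν : ℝ} (hA : 0 ≤ A) (hAM : A ≤ M)
    (hAD : A ≤ D * Real.exp (c * α) * S ^ ν) (hD : 0 ≤ D) (hS : 0 ≤ S) (hc : 0 ≤ c)
    (hα : 0 ≤ α) (hν : ν ≤ 1) :
    A ≤ max M D * Real.exp (α * (1 - ν / (1 + c))) * S ^ (ν / (1 + c)) := by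
  -- the weight `θ = 1 / (1 + c)` turns `exp (c * α)` into `exp ((1 - θ) * α)`
  set θ := 1 / (1 + c)
  have hθ0 : 0 ≤ θ := by positivity
  have hθ1 : θ ≤ 1 := div_le_one_of_le₀ (by linarith) (by positivity)
  have hM : 0 ≤ M := hA.trans hAM
  calc A ≤ M ^ (1 - θ) * (D * Real.exp (c * α) * S ^ ν) ^ θ :=
        le_rpow_mul_rpow_of_le_of_le hA hAM hAD hθ0 hθ1
    _ = M ^ (1 - θ) * D ^ θ * Real.exp (c * θ * α) * S ^ (ν / (1 + c)) := by
      rw [Real.mul_rpow (by positivity) (by positivity), Real.mul_rpow hD (by positivity),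
        ← Real.exp_mul, ← Real.rpow_mul hS]
      simp only [θ]; ring_nf
    _ ≤ max M D ^ (1 - θ) * max M D ^ θ * Real.exp (α * (1 - ν / (1 + c))) *
          S ^ (ν / (1 + c)) := by
      have hexp : c * θ * α ≤ α * (1 - ν / (1 + c)) := by
        have hcθ : c * θ = 1 - θ := by simp only [θ]; field_simp; ring
        rw [hcθ, div_eq_mul_one_div ν]
        change (1 - θ) * α ≤ α * (1 - ν * θ)
        nlinarith [mul_le_mul_of_nonneg_right hν hθ0]
      gcongr ?_ * ?_ * ?_ * _
      · exact Real.rpow_le_rpow hM (le_max_left _ _) (by linarith)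
      · exact Real.rpow_le_rpow hD (le_max_right _ _) hθ0
      · exact Real.exp_le_exp.mpr hexp
    _ = max M D * Real.exp (α * (1 - ν / (1 + c))) * S ^ (ν / (1 + c)) := by
      rw [← Real.rpow_add' (hM.trans (le_max_left _ _)) (by norm_num), sub_add_cancel,
        Real.rpow_one]

namespace SpaceTimeFourier

variable {n : ℕ} (q : ℝ × EuclideanSpace ℝ (Fin n) → ℂ)

lemma norm_exp_kernel (p : ℝ × EuclideanSpace ℝ (Fin n)) (τ : ℝ) (ξ : EuclideanSpace ℝ (Fin n)) :
    ‖Complex.exp (-2 * (Real.pi : ℂ) * Complex.I *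
      (((p.1 : ℂ) * (τ : ℂ)) + ((inner ℝ p.2 ξ : ℝ) : ℂ)))‖ = 1 := by
  simp [Complex.norm_exp]

lemma norm_le_integral_norm (τ : ℝ) (ξ : EuclideanSpace ℝ (Fin n)) :
    ‖spaceTimeFourier n q τ ξ‖ ≤ ∫ p, ‖q p‖ :=
  (norm_integral_le_integral_norm _).trans_eq <| by simp_rw [norm_mul, norm_exp_kernel, mul_one]

noncomputable def coneSup : ℝ :=
  ⨆ p : {p : ℝ × EuclideanSpace ℝ (Fin n) // |p.1| ≤ ‖p.2‖}, ‖spaceTimeFourier n q p.1.1 p.1.2‖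

lemma norm_le_coneSup {σ : ℝ} {η : EuclideanSpace ℝ (Fin n)} (h : |σ| ≤ ‖η‖) :
    ‖spaceTimeFourier n q σ η‖ ≤ coneSup q :=
  le_ciSup (f := fun p : {p : ℝ × EuclideanSpace ℝ (Fin n) // |p.1| ≤ ‖p.2‖} =>
    ‖spaceTimeFourier n q p.1.1 p.1.2‖)
    ⟨∫ p, ‖q p‖, by rintro _ ⟨p, rfl⟩; exact norm_le_integral_norm q _ _⟩ ⟨(σ, η), h⟩

lemma coneSup_nonneg : 0 ≤ coneSup q :=
  (norm_nonneg _).trans (norm_le_coneSup q (σ := 0) (η := 0) (by simp))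

lemma coneSup_le_integral_norm : coneSup q ≤ ∫ p, ‖q p‖ :=
  have : Nonempty {p : ℝ × EuclideanSpace ℝ (Fin n) // |p.1| ≤ ‖p.2‖} := ⟨⟨0, by simp⟩⟩
  ciSup_le fun p => norm_le_integral_norm q p.1.1 p.1.2

lemma add_smul_eq (τ : ℝ) (ξ e : EuclideanSpace ℝ (Fin n)) (r : ℝ) :
    spaceTimeFourier n q τ (ξ + r • e) = ∫ p, q p * Complex.exp (-2 * (Real.pi : ℂ) * Complex.I *
      (((p.1 : ℂ) * (τ : ℂ)) + ((inner ℝ p.2 ξ : ℝ) : ℂ))) *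
        Complex.exp ((-2 * Real.pi * inner ℝ p.2 e : ℝ) * r * Complex.I) := by
  refine integral_congr_ae (ae_of_all _ fun p => ?_)
  simp only [inner_add_right, real_inner_smul_right, mul_assoc, ← Complex.exp_add]
  congr 2
  push_cast
  ring

lemma norm_sub_sum_mul_add_smul_le (hq : Integrable q) {R : ℝ}
    (hR : ∀ p, q p ≠ 0 → ‖p.2‖ ≤ R) (τ : ℝ) (ξ : EuclideanSpace ℝ (Fin n))
    {e : EuclideanSpace ℝ (Fin n)} (he : ‖e‖ = 1) {ι : Type*} (s : Finset ι) (c x : ι → ℝ)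
    {K : ℕ} (hmoments : ∀ m ≤ K, ∑ j ∈ s, c j * x j ^ m = if m = 0 then 1 else 0)
    {X : ℝ} (hx : ∀ j ∈ s, |x j| ≤ X) (hK : 2 * (2 * Real.pi * R * X) ≤ K + 2) :
    ‖spaceTimeFourier n q τ ξ - ∑ j ∈ s, (c j : ℂ) * spaceTimeFourier n q τ (ξ + x j • e)‖ ≤
      (∑ j ∈ s, |c j|) * (2 * (2 * Real.pi * R * X) ^ (K + 1) / (K + 1)!) * ∫ p, ‖q p‖ := by
  set f : ℝ × EuclideanSpace ℝ (Fin n) → ℂ := fun p => q p * Complex.exp (-2 * (Real.pi : ℂ) *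
    Complex.I * (((p.1 : ℂ) * (τ : ℂ)) + ((inner ℝ p.2 ξ : ℝ) : ℂ)))
  set g : ℝ × EuclideanSpace ℝ (Fin n) → ℝ := fun p => -2 * Real.pi * inner ℝ p.2 e
  have hf : Integrable f := hq.mul_bdd (c := 1) (by fun_prop)
    (ae_of_all _ fun p => (norm_exp_kernel p τ ξ).le)
  have hnorm : ∫ p, ‖f p‖ = ∫ p, ‖q p‖ := by simp_rw [f, norm_mul, norm_exp_kernel, mul_one]
  have hpoint : ∀ p, f p ≠ 0 → ‖1 - ∑ j ∈ s, (c j : ℂ) * Complex.exp (g p * x j * Complex.I)‖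
      ≤ (∑ j ∈ s, |c j|) * (2 * (2 * Real.pi * R * X) ^ (K + 1) / (K + 1)!) := by
    intro p hfp
    have hp : ‖p.2‖ ≤ R := hR p (left_ne_zero_of_mul hfp)
    have hgp : |g p| ≤ 2 * Real.pi * R := by
      have := abs_real_inner_le_norm p.2 e
      simp only [g, abs_mul, abs_neg, abs_two, abs_of_pos Real.pi_pos, he, mul_one] at this ⊢
      nlinarith [Real.pi_pos]
    refine norm_one_sub_sum_mul_exp_ofReal_mul_I_le _ c x (g p) hmoments (fun j hj => ?_) hK
    rw [abs_mul]
    exact mul_le_mul hgp (hx j hj) (abs_nonneg _) ((abs_nonneg _).trans hgp)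
  have h := norm_integral_sub_sum_mul_integral_le hf (by fun_prop) s _ x hpoint
  rw [← hnorm]
  simp only [add_smul_eq]
  exact h

theorem norm_le_of_norm_le_on_cone (hq : Integrable q) {R : ℝ} (hR0 : 0 ≤ R)
    (hR : ∀ p, q p ≠ 0 → ‖p.2‖ ≤ R) {α τ : ℝ} {ξ : EuclideanSpace ℝ (Fin n)}
    (hτ : |τ| ≤ α) (hξ : ‖ξ‖ ≤ α) {e : EuclideanSpace ℝ (Fin n)} (he : ‖e‖ = 1) {S : ℝ}
    (hS : ∀ σ η, |σ| ≤ ‖η‖ → ‖spaceTimeFourier n q σ η‖ ≤ S) {K : ℕ} (hK : 0 < K)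
    (hKα : 16 * Real.pi * R * α ≤ K + 2) :
    ‖spaceTimeFourier n q τ ξ‖ ≤
      12 ^ K * S + 12 ^ K * (2 * (8 * Real.pi * R * α) ^ (K + 1) / (K + 1)!) * ∫ p, ‖q p‖ := by
  have hα : 0 ≤ α := (abs_nonneg τ).trans hτ
  have hS0 : 0 ≤ S := (norm_nonneg _).trans (hS 0 0 (by simp))
  obtain ⟨c, hmoments, hc⟩ := exists_extrapolation_weights K (2 * α / K)
  set x : ℕ → ℝ := fun j => 2 * α / K * (K + j)
  have hx : ∀ j ∈ range (K + 1), 2 * α ≤ x j ∧ x j ≤ 4 * α := by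
    intro j hj
    have hjK : (j : ℝ) ≤ K := by exact_mod_cast Nat.lt_succ_iff.mp (mem_range.mp hj)
    have hKpos : (0 : ℝ) < K := by exact_mod_cast hK
    simp only [x]
    rw [div_mul_eq_mul_div, le_div_iff₀ hKpos, div_le_iff₀ hKpos]
    constructor <;> nlinarith
  have hcone : ∀ j ∈ range (K + 1), ‖spaceTimeFourier n q τ (ξ + x j • e)‖ ≤ S := fun j hj =>
    hS _ _ (hτ.trans (le_norm_add_smul_of_norm_le hξ he (hx j hj).1))
  have hsum : ‖∑ j ∈ range (K + 1), (c j : ℂ) * spaceTimeFourier n q τ (ξ + x j • e)‖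
      ≤ 12 ^ K * S :=
    calc _ ≤ ∑ j ∈ range (K + 1), |c j| * S := by
          refine (norm_sum_le _ _).trans (sum_le_sum fun j hj => ?_)
          rw [norm_mul, Complex.norm_real, Real.norm_eq_abs]
          gcongr
          exact hcone j hj
      _ ≤ 12 ^ K * S := by rw [← sum_mul]; gcongr
  have hextrapolation := norm_sub_sum_mul_add_smul_le q hq hR τ ξ he _ c x hmoments (X := 4 * α)
    (fun j hj => abs_le.mpr ⟨by linarith [hx j hj], (hx j hj).2⟩) (by linarith)
  rw [show 2 * Real.pi * R * (4 * α) = 8 * Real.pi * R * α by ring] at hextrapolation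
  calc ‖spaceTimeFourier n q τ ξ‖
      ≤ ‖∑ j ∈ range (K + 1), (c j : ℂ) * spaceTimeFourier n q τ (ξ + x j • e)‖ +
        ‖spaceTimeFourier n q τ ξ -
          ∑ j ∈ range (K + 1), (c j : ℂ) * spaceTimeFourier n q τ (ξ + x j • e)‖ :=
        norm_le_insert' _ _
    _ ≤ _ := by
      refine add_le_add hsum (hextrapolation.trans ?_)
      gcongr

theorem norm_le_twelve_pow_mul_add (hq : Integrable q) {R : ℝ} (hR0 : 0 ≤ R)
    (hR : ∀ p, q p ≠ 0 → ‖p.2‖ ≤ R) {α τ : ℝ} {ξ : EuclideanSpace ℝ (Fin n)}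
    (hτ : |τ| ≤ α) (hξ : ‖ξ‖ ≤ α) {e : EuclideanSpace ℝ (Fin n)} (he : ‖e‖ = 1) {S : ℝ}
    (hS : ∀ σ η, |σ| ≤ ‖η‖ → ‖spaceTimeFourier n q σ η‖ ≤ S) {M : ℝ} (hqM : ∫ p, ‖q p‖ ≤ M)
    {K : ℕ} (hK : 0 < K) (hKα : 3456 * Real.pi * R * α ≤ K) :
    ‖spaceTimeFourier n q τ ξ‖ ≤ 12 ^ K * S + (12 ^ K)⁻¹ * M := by
  have hα : 0 ≤ α := (abs_nonneg τ).trans hτ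
  have hρ : 0 ≤ 8 * Real.pi * R * α := by positivity
  calc ‖spaceTimeFourier n q τ ξ‖
      ≤ 12 ^ K * S + 12 ^ K * (2 * (8 * Real.pi * R * α) ^ (K + 1) / (K + 1)!) * ∫ p, ‖q p‖ :=
        norm_le_of_norm_le_on_cone q hq hR0 hR hτ hξ he hS hK (by linarith)
    _ ≤ 12 ^ K * S + (12 ^ K)⁻¹ * M := by
      gcongr
      exact twelve_pow_mul_two_mul_pow_div_factorial_le hρ (by linarith)

theorem norm_le_exp_mul_sqrt_mul_sqrt (hq : Integrable q) {R : ℝ} (hR0 : 0 ≤ R)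
    (hR : ∀ p, q p ≠ 0 → ‖p.2‖ ≤ R) {α τ : ℝ} {ξ : EuclideanSpace ℝ (Fin n)}
    (hτ : |τ| ≤ α) (hξ : ‖ξ‖ ≤ α) {e : EuclideanSpace ℝ (Fin n)} (he : ‖e‖ = 1) {S : ℝ}
    (hS : ∀ σ η, |σ| ≤ ‖η‖ → ‖spaceTimeFourier n q σ η‖ ≤ S) {M : ℝ} (hqM : ∫ p, ‖q p‖ ≤ M)
    (hSM : S ≤ M) :
    ‖spaceTimeFourier n q τ ξ‖ ≤
      3456 * √M * Real.exp (3456 * Real.pi * R * Real.log 12 * α) * √S := by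
  have hα : 0 ≤ α := (abs_nonneg τ).trans hτ
  have hS0 : 0 ≤ S := (norm_nonneg _).trans (hS 0 0 (by simp))
  set K₀ := ⌈3456 * Real.pi * R * α⌉₊ + 1
  have hK₀ : (12 : ℝ) ^ K₀ ≤ 144 * Real.exp (3456 * Real.pi * R * Real.log 12 * α) := by
    have hceil : (K₀ : ℝ) ≤ 3456 * Real.pi * R * α + 2 := by
      have := Nat.ceil_lt_add_one (show 0 ≤ 3456 * Real.pi * R * α by positivity)
      push_cast [K₀]; linarith
    calc (12 : ℝ) ^ K₀ = 12 ^ (K₀ : ℝ) := (Real.rpow_natCast _ _).symm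
      _ ≤ 12 ^ (3456 * Real.pi * R * α + 2) := Real.rpow_le_rpow_of_exponent_le (by norm_num) hceil
      _ = 144 * Real.exp (3456 * Real.pi * R * Real.log 12 * α) := by
        rw [Real.rpow_add (by norm_num), Real.rpow_def_of_pos (by norm_num)]
        norm_num; ring_nf
  have hbalance : ∀ m : ℕ, ‖spaceTimeFourier n q τ ξ‖ ≤
      12 ^ K₀ * (12 ^ m * √S ^ 2 + (12 ^ m)⁻¹ * √M ^ 2) := by
    intro m
    have hK : 3456 * Real.pi * R * α ≤ (K₀ + m : ℕ) := by
      push_cast [K₀]; linarith [Nat.le_ceil (3456 * Real.pi * R * α), (m.cast_nonneg : (0 : ℝ) ≤ m)]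
    refine (norm_le_twelve_pow_mul_add q hq hR0 hR hτ hξ he hS hqM (by omega) hK).trans ?_
    rw [Real.sq_sqrt hS0, Real.sq_sqrt ((hS0.trans hSM)), pow_add, mul_add, mul_inv, ← mul_assoc,
      ← mul_assoc]
    have h12 : (1 : ℝ) ≤ 12 ^ K₀ := one_le_pow₀ (by norm_num)
    gcongr
    · exact hS0.trans hSM
    · exact (inv_le_one_of_one_le₀ h12).trans h12
  calc ‖spaceTimeFourier n q τ ξ‖ ≤ 2 * 12 * 12 ^ K₀ * (√S * √M) :=
        le_two_mul_mul_of_forall_le (by norm_num) (by positivity) (Real.sqrt_nonneg _)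
          (Real.sqrt_le_sqrt hSM) hbalance
    _ ≤ 2 * 12 * (144 * Real.exp (3456 * Real.pi * R * Real.log 12 * α)) * (√S * √M) := by
        gcongr
    _ = _ := by ring

end SpaceTimeFourier

open SpaceTimeFourier in
theorem analytic_continuation_from_cone
    (n : ℕ) (hn : 1 ≤ n) (T M : ℝ) (hT : 0 < T) (hM : 0 < M) :
    ∃ C > (0 : ℝ), ∃ μ ∈ Set.Ioo (0 : ℝ) 1,
      ∀ q : ℝ × EuclideanSpace ℝ (Fin n) → ℂ,
        Integrable q →
        (∀ p : ℝ × EuclideanSpace ℝ (Fin n),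
          ¬ (p.1 ^ 2 + ‖p.2‖ ^ 2 ≤ 2 * T ^ 2) → q p = 0) →
        (∫ p, ‖q p‖) ≤ M →
        ∀ α : ℝ, 1 ≤ α →
        ∀ (τ : ℝ) (ξ : EuclideanSpace ℝ (Fin n)), τ ^ 2 + ‖ξ‖ ^ 2 ≤ α ^ 2 →
          ‖spaceTimeFourier n q τ ξ‖ ≤
            C * Real.exp (α * (1 - μ)) *
              (⨆ p : {p : ℝ × EuclideanSpace ℝ (Fin n) // |p.1| ≤ ‖p.2‖},
                ‖spaceTimeFourier n q p.1.1 p.1.2‖) ^ μ := by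
  set e : EuclideanSpace ℝ (Fin n) := EuclideanSpace.single ⟨0, hn⟩ 1
  have he : ‖e‖ = 1 := by simp [e]
  set c := 3456 * Real.pi * (2 * T) * Real.log 12
  have hc : 0 ≤ c := by positivity
  refine ⟨max M (3456 * √M), lt_max_of_lt_left hM, 1 / 2 / (1 + c),
    ⟨by positivity, by rw [div_lt_one (by positivity)]; linarith⟩, ?_⟩
  intro q hq hsupp hqM α hα τ ξ hball
  have hτ : |τ| ≤ α := abs_le_of_sq_le_sq (by nlinarith [sq_nonneg ‖ξ‖]) (by linarith)
  have hξ : ‖ξ‖ ≤ α := le_of_sq_le_sq (by nlinarith [sq_nonneg τ]) (by linarith)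
  have hR : ∀ p, q p ≠ 0 → ‖p.2‖ ≤ 2 * T := fun p hp => by
    have := not_imp_comm.mp (hsupp p) hp
    nlinarith [norm_nonneg p.2, sq_nonneg p.1]
  have hA := norm_le_exp_mul_sqrt_mul_sqrt q hq (by positivity) hR hτ hξ he
    (fun _ _ => norm_le_coneSup q) hqM ((coneSup_le_integral_norm q).trans hqM)
  rw [Real.sqrt_eq_rpow (coneSup q)] at hA
  exact le_max_mul_exp_mul_rpow (norm_nonneg _) ((norm_le_integral_norm q τ ξ).trans hqM) hA
    (by positivity) (coneSup_nonneg q) hc (by linarith) (by norm_num)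
end
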